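/- arXiv:1907.12751 — 2 statements merged into one kernel-verified Lean document; each statement's English description precedes it below -/
import Mathlib

section
/- Let H be a Hopf algebra with bijective antipode over a field k, A a right H-comodule algebra with coinvariants B = A^{co H}, and j: H → A a right H-comodule algebra map. Then h ▷ b := j(h₁) b j(S(h₂)) defines an action of H on B making B an H-module algebra; the smash product B ♯ H, i.e. the H-comodule B ⊗ H (with coaction id ⊗ Δ) equipped with the product (b ⊗ h)(b' ⊗ h') = b (h₁ ▷ b') ⊗ h₂ h', is a right H-comodule algebra; and the map θ: B ♯ H → A, b ⊗ h ↦ b j(h), is an isomorphism of right H-comodule algebras. -/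
/-!
STATEMENT 1.  Let `H` be a Hopf algebra with bijective antipode over a field `k`, `A` a right
`H`-comodule algebra with coinvariants `B = A^{co H}`, and `j : H → A` a right `H`-comodule
algebra map.  Then `h ▷ b := j(h₁) b j(S(h₂))` defines an action of `H` on `B` making `B` an
`H`-module algebra; the smash product `B ♯ H`, i.e. the `H`-comodule `B ⊗ H` (with coaction
`id ⊗ Δ`) equipped with the product `(b ⊗ h)(b' ⊗ h') = b (h₁ ▷ b') ⊗ h₂ h'`, is a right
`H`-comodule algebra; and the map `θ : B ♯ H → A`, `b ⊗ h ↦ b j(h)`, is an isomorphism of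
right `H`-comodule algebras.

The comodule algebra structure on `B ♯ H` is the one transported along the bijection `θ`;
accordingly the theorem asserts: (a) the action lands in `B` and satisfies the `H`-module
algebra axioms; (b) `θ` is a `k`-linear bijection; (c) the product of `A` pulled back along
`θ` is exactly the smash product `(b ⊗ h)(b' ⊗ h') = b (h₁ ▷ b') ⊗ h₂ h'`; (d) `θ`
intertwines the coaction of `A` with the coaction `id ⊗ Δ` on `B ⊗ H`.
-/

open TensorProduct

namespace QPB

variable (k : Type*) [CommRing k]

/-- A right `H`-comodule algebra structure on the `k`-algebra `A`. -/
structure ComodAlg (H A : Type*) [Ring H] [Ring A] [Bialgebra k H] [Algebra k A] where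
  δ : A →ₐ[k] A ⊗[k] H
  counit_id : (TensorProduct.rid k A).toLinearMap ∘ₗ
      (TensorProduct.map LinearMap.id (Coalgebra.counit (R := k) (A := H))) ∘ₗ δ.toLinearMap
      = LinearMap.id
  coassoc : (TensorProduct.assoc k A H H).toLinearMap ∘ₗ
      (TensorProduct.map δ.toLinearMap LinearMap.id) ∘ₗ δ.toLinearMap
      = (TensorProduct.map LinearMap.id (Coalgebra.comul (R := k) (A := H))) ∘ₗ δ.toLinearMap

variable {k}

/-- The subalgebra of coinvariants `A^{co H} = {a : δ a = a ⊗ 1}`. -/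
def ComodAlg.coinv {H A : Type*} [Ring H] [Ring A] [Bialgebra k H] [Algebra k A]
    (c : ComodAlg k H A) : Subalgebra k A where
  carrier := {a | c.δ a = a ⊗ₜ[k] 1}
  mul_mem' := by
    intro a b ha hb
    simp only [Set.mem_setOf_eq] at *
    rw [map_mul, ha, hb, Algebra.TensorProduct.tmul_mul_tmul, mul_one]
  one_mem' := by
    simp only [Set.mem_setOf_eq, map_one, Algebra.TensorProduct.one_def]
  add_mem' := by
    intro a b ha hb
    simp only [Set.mem_setOf_eq] at *
    rw [map_add, ha, hb, TensorProduct.add_tmul]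
  algebraMap_mem' := by
    intro r
    simp only [Set.mem_setOf_eq, AlgHom.commutes, Algebra.TensorProduct.algebraMap_apply]

variable (k)

/-- A linear map `j : H → A` is a right `H`-comodule map: `δ ∘ j = (j ⊗ id) ∘ Δ`. -/
def IsComodMap {H A : Type*} [Ring H] [Ring A] [Bialgebra k H] [Algebra k A]
    (c : ComodAlg k H A) (j : H →ₗ[k] A) : Prop :=
  c.δ.toLinearMap ∘ₗ j
    = (TensorProduct.map j LinearMap.id) ∘ₗ (Coalgebra.comul (R := k) (A := H))

/-- The linear map `H ⊗ A → A`, `h ⊗ a ↦ j(h₁) a j(S(h₂))` (Sweedler notation),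
built from the algebra map `j : H → A` and the antipode `S` of `H`. -/
noncomputable def adAction {H A : Type*} [Ring H] [Ring A] [HopfAlgebra k H] [Algebra k A]
    (j : H →ₐ[k] A) : H ⊗[k] A →ₗ[k] A :=
  (LinearMap.mul' k A) ∘ₗ (LinearMap.lTensor A (LinearMap.mul' k A)) ∘ₗ
    (TensorProduct.map j.toLinearMap
      (TensorProduct.map LinearMap.id
        (j.toLinearMap ∘ₗ HopfAlgebra.antipode (R := k) (A := H)))) ∘ₗ
    (LinearMap.lTensor H (TensorProduct.comm k H A).toLinearMap) ∘ₗ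
    (TensorProduct.assoc k H H A).toLinearMap ∘ₗ
    (LinearMap.rTensor A (Coalgebra.comul (R := k) (A := H)))

end QPB

open QPB

/-! The proof lives in convolution algebras `Hom(H, C)`. An algebra map `φ : H → C` is a
convolution unit with inverse `φ ∘ S`, and `h ↦ h ▷ c` is the convolution product of
`h ↦ φ(h) c` with `φ ∘ S`; the module-algebra axioms reduce to cancelling `(φ ∘ S) * φ = 1`.

The comodule condition says that `δ ∘ j` is the convolution product of `h ↦ j h ⊗ 1` and
`h ↦ 1 ⊗ h`. The second factor commutes with `b ⊗ 1`, so it cancels from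
`δ (h ▷ b) = δ (j h₁) (b ⊗ 1) δ (j (S h₂))`, leaving `(h ▷ b) ⊗ 1`.

Via the coaction, `Hom(A, C)` is a right module over `Hom(H, C)`:
`(u ⋆ f)(a) = u(a₀) f(a₁)`. The same cancellation shows that `E = id ⋆ (j ∘ S)`,
`a ↦ a₀ j(S a₁)`, takes values in `B`, and `a ↦ E(a₀) ⊗ a₁` inverts `θ`. -/

open Coalgebra HopfAlgebra WithConv LinearMap

section ConvolutionUnits

variable {k H C : Type*} [CommRing k] [Ring H] [HopfAlgebra k H] [Ring C] [Algebra k C]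

lemma AlgHom.convMul_comp_antipode (φ : H →ₐ[k] C) :
    toConv φ.toLinearMap * toConv (φ.toLinearMap ∘ₗ antipode k) = 1 := by
  ext1
  have := congr(φ.toLinearMap ∘ₗ ofConv $(id_mul_antipode (R := k) (C := H)))
  rw [algHom_comp_convMul_distrib] at this
  ext h
  simpa using congr($this h)

lemma AlgHom.comp_antipode_convMul (φ : H →ₐ[k] C) :
    toConv (φ.toLinearMap ∘ₗ antipode k) * toConv φ.toLinearMap = 1 := by
  ext1
  have := congr(φ.toLinearMap ∘ₗ ofConv $(antipode_mul_id (R := k) (C := H)))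
  rw [algHom_comp_convMul_distrib] at this
  ext h
  simpa using congr($this h)

noncomputable def AlgHom.convUnit (φ : H →ₐ[k] C) : (WithConv (H →ₗ[k] C))ˣ :=
  ⟨_, _, φ.convMul_comp_antipode, φ.comp_antipode_convMul⟩

lemma AlgHom.toConv_comp_antipode_of_convMul {φ ψ χ : H →ₐ[k] C}
    (h : toConv χ.toLinearMap = toConv φ.toLinearMap * toConv ψ.toLinearMap) :
    toConv (χ.toLinearMap ∘ₗ antipode k) =
      toConv (ψ.toLinearMap ∘ₗ antipode k) * toConv (φ.toLinearMap ∘ₗ antipode k) := by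
  have hunit : χ.convUnit = φ.convUnit * ψ.convUnit := Units.ext h
  have hinv := congr((($hunit)⁻¹ : (WithConv (H →ₗ[k] C))ˣ).val)
  rwa [mul_inv_rev] at hinv

lemma LinearMap.mulRight_comp_convMul (x : C) (f g : WithConv (H →ₗ[k] C)) :
    toConv (mulRight k x ∘ₗ (f * g).ofConv) = f * toConv (mulRight k x ∘ₗ g.ofConv) := by
  ext h
  simp [(ℛ k h).convMul_apply, mul_assoc]

lemma LinearMap.mulLeft_comp_convMul (x : C) (f g : WithConv (H →ₗ[k] C)) :
    toConv (mulLeft k x ∘ₗ (f * g).ofConv) = toConv (mulLeft k x ∘ₗ f.ofConv) * g := by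
  ext h
  simp [(ℛ k h).convMul_apply, mul_assoc]

lemma LinearMap.mulLeft_comp_convOne (x : C) :
    mulLeft k x ∘ₗ (1 : WithConv (H →ₗ[k] C)).ofConv =
      mulRight k x ∘ₗ (1 : WithConv (H →ₗ[k] C)).ofConv := by
  ext h
  simp [Algebra.commutes]

end ConvolutionUnits

namespace QPB

section AdjointAction

variable {k H C D : Type*} [CommRing k] [Ring H] [HopfAlgebra k H] [Ring C] [Algebra k C]
  [Ring D] [Algebra k D]

noncomputable def adConv (φ : H →ₐ[k] C) (c : C) : WithConv (H →ₗ[k] C) :=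
  toConv (mulRight k c ∘ₗ φ.toLinearMap) * toConv (φ.toLinearMap ∘ₗ antipode k)

lemma adAction_tmul (φ : H →ₐ[k] C) (h : H) (c : C) :
    adAction k φ (h ⊗ₜ c) = adConv φ c h := by
  simp [adAction, adConv, (ℛ k h).convMul_apply, ← (ℛ k h).eq, sum_tmul, mul_assoc]

lemma map_adConv (g : C →ₐ[k] D) (φ : H →ₐ[k] C) (c : C) (h : H) :
    g (adConv φ c h) = adConv (g.comp φ) (g c) h := by
  simp [adConv, (ℛ k h).convMul_apply]

lemma adConv_one (φ : H →ₐ[k] C) : adConv φ 1 = 1 := by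
  simpa [adConv] using φ.convMul_comp_antipode

lemma adConv_convMul_self (φ : H →ₐ[k] C) (c : C) :
    adConv φ c * toConv φ.toLinearMap = toConv (mulRight k c ∘ₗ φ.toLinearMap) := by
  rw [adConv, mul_assoc, φ.comp_antipode_convMul, mul_one]

lemma adConv_mul (φ : H →ₐ[k] C) (c c' : C) :
    adConv φ (c * c') = adConv φ c * adConv φ c' := by
  calc adConv φ (c * c')
      = toConv (mulRight k c' ∘ₗ (toConv (mulRight k c ∘ₗ φ.toLinearMap) * 1).ofConv) *
          toConv (φ.toLinearMap ∘ₗ antipode k) := by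
        rw [mul_one, adConv, mulRight_mul]; rfl
    _ = toConv (mulRight k c ∘ₗ φ.toLinearMap) *
          toConv (mulRight k c' ∘ₗ (toConv (φ.toLinearMap ∘ₗ antipode k) *
            toConv φ.toLinearMap).ofConv) * toConv (φ.toLinearMap ∘ₗ antipode k) := by
        rw [φ.comp_antipode_convMul, mulRight_comp_convMul]
    _ = adConv φ c * adConv φ c' := by
        rw [mulRight_comp_convMul, adConv, adConv, mul_assoc, mul_assoc, mul_assoc]

lemma adConv_of_convMul {φ ψ χ : H →ₐ[k] C}
    (h : toConv χ.toLinearMap = toConv φ.toLinearMap * toConv ψ.toLinearMap) {c : C}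
    (hc : ∀ x, Commute (ψ x) c) : adConv χ c = adConv φ c := by
  have hψ : mulRight k c ∘ₗ ψ.toLinearMap = mulLeft k c ∘ₗ ψ.toLinearMap := by
    ext x
    exact (hc x).eq
  calc adConv χ c
      = toConv (mulRight k c ∘ₗ (toConv φ.toLinearMap * toConv ψ.toLinearMap).ofConv) *
          (toConv (ψ.toLinearMap ∘ₗ antipode k) * toConv (φ.toLinearMap ∘ₗ antipode k)) := by
        rw [adConv, AlgHom.toConv_comp_antipode_of_convMul h, ← h]
    _ = toConv φ.toLinearMap * toConv (mulLeft k c ∘ₗ (toConv ψ.toLinearMap *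
          toConv (ψ.toLinearMap ∘ₗ antipode k)).ofConv) * toConv (φ.toLinearMap ∘ₗ antipode k) := by
        rw [mulRight_comp_convMul, mulLeft_comp_convMul, ← mul_assoc, ← mul_assoc]
        simp only [hψ]
    _ = adConv φ c := by
        rw [ψ.convMul_comp_antipode, mulLeft_comp_convOne, ← mulRight_comp_convMul, mul_one]
        rfl

end AdjointAction

section ModuleAlgebra

variable {k H C : Type*} [CommRing k] [Ring H] [HopfAlgebra k H] [Ring C] [Algebra k C]

lemma adAction_one_tmul (φ : H →ₐ[k] C) (c : C) : adAction k φ (1 ⊗ₜ c) = c := by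
  simp [adAction_tmul, adConv, Algebra.TensorProduct.one_def]

lemma adAction_mul_tmul (φ : H →ₐ[k] C) (h h' : H) (c : C) :
    adAction k φ ((h * h') ⊗ₜ c) = adAction k φ (h ⊗ₜ adAction k φ (h' ⊗ₜ c)) := by
  simp [adAction_tmul, adConv, ((ℛ k h).mul (ℛ k h')).convMul_apply, (ℛ k h).convMul_apply,
    (ℛ k h').convMul_apply, Finset.sum_product, antipode_mul_antidistrib, Finset.mul_sum,
    Finset.sum_mul, mul_assoc]

lemma adAction_tmul_one (φ : H →ₐ[k] C) (h : H) :
    adAction k φ (h ⊗ₜ 1) = algebraMap k C (counit h) := by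
  rw [adAction_tmul, adConv_one, convOne_apply]

lemma adAction_tmul_mul (φ : H →ₐ[k] C) {h : H} {ι : Type*} (r : Repr k h ι) (c c' : C) :
    adAction k φ (h ⊗ₜ (c * c')) =
      ∑ i ∈ r.index, adAction k φ (r.left i ⊗ₜ c) * adAction k φ (r.right i ⊗ₜ c') := by
  simp only [adAction_tmul, adConv_mul, r.convMul_apply]

lemma sum_adAction_tmul_mul (φ : H →ₐ[k] C) {h : H} {ι : Type*} (r : Repr k h ι) (c : C) :
    ∑ i ∈ r.index, adAction k φ (r.left i ⊗ₜ c) * φ (r.right i) = φ h * c := by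
  simpa [adAction_tmul, r.convMul_apply] using congr(ofConv $(adConv_convMul_self φ c) h)

end ModuleAlgebra

namespace ComodAlg

section ConvAction

variable {k H A C D : Type*} [CommRing k] [Ring H] [Ring A] [Algebra k A] [Ring C] [Algebra k C]
  [Ring D] [Algebra k D] [Bialgebra k H] (c : ComodAlg k H A)

noncomputable def convAct (u : A →ₗ[k] C) (f : H →ₗ[k] C) : A →ₗ[k] C :=
  mul' k C ∘ₗ map u f ∘ₗ c.δ.toLinearMap

lemma convAct_convAct (u : A →ₗ[k] C) (f g : H →ₗ[k] C) :
    c.convAct (c.convAct u f) g = c.convAct u (toConv f * toConv g).ofConv := by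
  have hleft : mul' k C ∘ₗ map (c.convAct u f) g =
      (mul' k C ∘ₗ map (mul' k C ∘ₗ map u f) g) ∘ₗ map c.δ.toLinearMap LinearMap.id := by
    ext; simp [convAct]
  have hright : mul' k C ∘ₗ map u (toConv f * toConv g).ofConv =
      (mul' k C ∘ₗ map u (mul' k C ∘ₗ map f g)) ∘ₗ map LinearMap.id comul := by
    ext; simp [LinearMap.convMul_def]
  have hassoc : mul' k C ∘ₗ map (mul' k C ∘ₗ map u f) g =
      (mul' k C ∘ₗ map u (mul' k C ∘ₗ map f g)) ∘ₗ (TensorProduct.assoc k A H H).toLinearMap := by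
    ext; simp [mul_assoc]
  calc c.convAct (c.convAct u f) g
      = (mul' k C ∘ₗ map (mul' k C ∘ₗ map u f) g) ∘ₗ
          map c.δ.toLinearMap LinearMap.id ∘ₗ c.δ.toLinearMap := by
        rw [← LinearMap.comp_assoc, ← hleft]; rfl
    _ = (mul' k C ∘ₗ map u (mul' k C ∘ₗ map f g)) ∘ₗ
          map LinearMap.id comul ∘ₗ c.δ.toLinearMap := by
        rw [hassoc, ← c.coassoc]; rfl
    _ = c.convAct u (toConv f * toConv g).ofConv := by
        rw [← LinearMap.comp_assoc, ← hright]; rfl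

lemma convAct_one (u : A →ₗ[k] C) : c.convAct u (1 : WithConv (H →ₗ[k] C)).ofConv = u := by
  have hunit : mul' k C ∘ₗ map u (1 : WithConv (H →ₗ[k] C)).ofConv =
      u ∘ₗ (TensorProduct.rid k A).toLinearMap ∘ₗ map LinearMap.id counit := by
    ext; simp [← Algebra.commutes, ← Algebra.smul_def]
  calc c.convAct u (1 : WithConv (H →ₗ[k] C)).ofConv
      = u ∘ₗ (TensorProduct.rid k A).toLinearMap ∘ₗ map LinearMap.id counit ∘ₗ
          c.δ.toLinearMap := by
        rw [convAct, ← LinearMap.comp_assoc, hunit]; rfl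
    _ = u := by rw [c.counit_id, LinearMap.comp_id]

lemma comp_convAct (g : C →ₐ[k] D) (u : A →ₗ[k] C) (f : H →ₗ[k] C) :
    g.toLinearMap ∘ₗ c.convAct u f = c.convAct (g.toLinearMap ∘ₗ u) (g.toLinearMap ∘ₗ f) := by
  have hmul : (g.toLinearMap ∘ₗ mul' k C) ∘ₗ map u f =
      mul' k D ∘ₗ map (g.toLinearMap ∘ₗ u) (g.toLinearMap ∘ₗ f) := by
    ext; simp
  rw [convAct, convAct, ← LinearMap.comp_assoc, ← LinearMap.comp_assoc, ← LinearMap.comp_assoc,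
    hmul]

open Algebra.TensorProduct in
lemma convAct_includeLeft_includeRight :
    c.convAct includeLeft.toLinearMap (includeRight : H →ₐ[k] A ⊗[k] H).toLinearMap =
      c.δ.toLinearMap := by
  have hmul : mul' k (A ⊗[k] H) ∘ₗ
      map includeLeft.toLinearMap (includeRight : H →ₐ[k] A ⊗[k] H).toLinearMap =
        LinearMap.id := by
    ext; simp
  rw [convAct, ← LinearMap.comp_assoc, hmul, LinearMap.id_comp]

end ConvAction

section ComodAlgMap

variable {k H A : Type*} [CommRing k] [Ring H] [Ring A] [Algebra k A] [HopfAlgebra k H]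
  {c : ComodAlg k H A} {j : H →ₐ[k] A}

open Algebra.TensorProduct

lemma delta_apply_of_isComodMap (hj : IsComodMap k c j.toLinearMap) {h : H} {ι : Type*}
    (r : Repr k h ι) : c.δ (j h) = ∑ i ∈ r.index, j (r.left i) ⊗ₜ r.right i := by
  simpa [← r.eq] using congr($hj h)

lemma toConv_delta_comp_eq_convMul (hj : IsComodMap k c j.toLinearMap) :
    toConv (c.δ.comp j).toLinearMap =
      toConv ((includeLeft : A →ₐ[k] A ⊗[k] H).comp j).toLinearMap *
        toConv (includeRight : H →ₐ[k] A ⊗[k] H).toLinearMap := by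
  ext h
  simp [(ℛ k h).convMul_apply, delta_apply_of_isComodMap hj (ℛ k h)]

lemma adAction_mem_coinv (hj : IsComodMap k c j.toLinearMap) (h : H) {b : A}
    (hb : b ∈ c.coinv) : adAction k j (h ⊗ₜ b) ∈ c.coinv := by
  have hcomm (x : H) : Commute (includeRight x : A ⊗[k] H) (includeLeft (S := k) b) := by
    simp [Commute, SemiconjBy]
  change c.δ _ = _
  rw [adAction_tmul, map_adConv, show c.δ b = (includeLeft : A →ₐ[k] A ⊗[k] H) b from hb,
    adConv_of_convMul (toConv_delta_comp_eq_convMul hj) hcomm, ← map_adConv]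
  rfl

lemma delta_mul_apply (hj : IsComodMap k c j.toLinearMap) {b : A} (hb : b ∈ c.coinv) {h : H}
    {ι : Type*} (r : Repr k h ι) :
    c.δ (b * j h) = ∑ i ∈ r.index, (b * j (r.left i)) ⊗ₜ r.right i := by
  rw [map_mul, show c.δ b = b ⊗ₜ 1 from hb, delta_apply_of_isComodMap hj r, Finset.mul_sum]
  simp [tmul_mul_tmul]

end ComodAlgMap

section SmashProduct

variable {k H A : Type*} [CommRing k] [Ring H] [Ring A] [Algebra k A] [HopfAlgebra k H]
  {c : ComodAlg k H A} {j : H →ₐ[k] A}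

open Algebra.TensorProduct

variable (c j) in
noncomputable def coinvProj : A →ₗ[k] A := c.convAct LinearMap.id (j.toLinearMap ∘ₗ antipode k)

variable (c j) in
lemma convAct_coinvProj : c.convAct (c.coinvProj j) j.toLinearMap = LinearMap.id := by
  rw [coinvProj, convAct_convAct, j.comp_antipode_convMul, convAct_one]

lemma delta_comp_coinvProj (hj : IsComodMap k c j.toLinearMap) :
    c.δ.toLinearMap ∘ₗ c.coinvProj j =
      (includeLeft : A →ₐ[k] A ⊗[k] H).toLinearMap ∘ₗ c.coinvProj j := by
  have hinv : toConv (includeRight : H →ₐ[k] A ⊗[k] H).toLinearMap *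
      toConv ((c.δ.comp j).toLinearMap ∘ₗ antipode k) =
        toConv (((includeLeft : A →ₐ[k] A ⊗[k] H).comp j).toLinearMap ∘ₗ antipode k) := by
    rw [AlgHom.toConv_comp_antipode_of_convMul (toConv_delta_comp_eq_convMul hj), ← mul_assoc,
      AlgHom.convMul_comp_antipode, one_mul]
  calc c.δ.toLinearMap ∘ₗ c.coinvProj j
      = c.convAct (c.convAct includeLeft.toLinearMap includeRight.toLinearMap)
          ((c.δ.comp j).toLinearMap ∘ₗ antipode k) := by
        rw [coinvProj, comp_convAct, convAct_includeLeft_includeRight]; rfl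
    _ = (includeLeft : A →ₐ[k] A ⊗[k] H).toLinearMap ∘ₗ c.coinvProj j := by
        rw [convAct_convAct, hinv, coinvProj, comp_convAct]; rfl

lemma coinvProj_mem (hj : IsComodMap k c j.toLinearMap) (a : A) : c.coinvProj j a ∈ c.coinv :=
  congr($(delta_comp_coinvProj hj) a)

lemma coinvProj_mul_apply (hj : IsComodMap k c j.toLinearMap) {b : A} (hb : b ∈ c.coinv)
    (h : H) : c.coinvProj j (b * j h) = counit (R := k) h • b := by
  have hunit := congr(ofConv $(j.convMul_comp_antipode) h)
  rw [(ℛ k h).convMul_apply] at hunit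
  simp only [coinvProj, convAct, LinearMap.comp_apply, AlgHom.toLinearMap_apply,
    delta_mul_apply hj hb (ℛ k h), map_sum, TensorProduct.map_tmul, mul'_apply]
  simp_all [mul_assoc, ← Finset.mul_sum, Algebra.smul_def, Algebra.commutes]

variable (c j) in
noncomputable def smashMap : c.coinv ⊗[k] H →ₗ[k] A :=
  mul' k A ∘ₗ map c.coinv.val.toLinearMap j.toLinearMap

lemma delta_comp_smashMap (hj : IsComodMap k c j.toLinearMap) :
    c.δ.toLinearMap ∘ₗ c.smashMap j = map (c.smashMap j) LinearMap.id ∘ₗ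
      (TensorProduct.assoc k c.coinv H H).symm.toLinearMap ∘ₗ lTensor c.coinv comul := by
  ext b h
  simp [smashMap, delta_mul_apply hj b.2 (ℛ k h), ← (ℛ k h).eq, tmul_sum]

noncomputable def smashMapInv (hj : IsComodMap k c j.toLinearMap) : A →ₗ[k] c.coinv ⊗[k] H :=
  map ((c.coinvProj j).codRestrict (Subalgebra.toSubmodule c.coinv) (coinvProj_mem hj))
    LinearMap.id ∘ₗ c.δ.toLinearMap

lemma smashMap_comp_smashMapInv (hj : IsComodMap k c j.toLinearMap) :
    c.smashMap j ∘ₗ smashMapInv hj = LinearMap.id := by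
  have hmap : c.smashMap j ∘ₗ
      map ((c.coinvProj j).codRestrict (Subalgebra.toSubmodule c.coinv) (coinvProj_mem hj))
        LinearMap.id = mul' k A ∘ₗ map (c.coinvProj j) j.toLinearMap := by
    ext; rfl
  rw [← c.convAct_coinvProj j, smashMapInv, ← LinearMap.comp_assoc, hmap]
  rfl

lemma smashMapInv_comp_smashMap (hj : IsComodMap k c j.toLinearMap) :
    smashMapInv hj ∘ₗ c.smashMap j = LinearMap.id := by
  have hproj (b : c.coinv) (x : H) :
      (c.coinvProj j).codRestrict (Subalgebra.toSubmodule c.coinv) (coinvProj_mem hj) (b * j x) =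
        counit (R := k) x • b :=
    Subtype.ext (coinvProj_mul_apply hj b.2 x)
  refine TensorProduct.ext' fun b h => ?_
  simp only [smashMap, smashMapInv, LinearMap.comp_apply, TensorProduct.map_tmul,
    AlgHom.toLinearMap_apply, Subalgebra.coe_val, mul'_apply, delta_mul_apply hj b.2 (ℛ k h),
    map_sum, hproj, LinearMap.id_apply, smul_tmul, ← tmul_sum, sum_counit_smul]

noncomputable def smashEquiv (hj : IsComodMap k c j.toLinearMap) : c.coinv ⊗[k] H ≃ₗ[k] A :=
  .ofLinearMap (c.smashMap j) (smashMapInv hj) (smashMap_comp_smashMapInv hj)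
    (smashMapInv_comp_smashMap hj)

end SmashProduct

end ComodAlg

end QPB

theorem statement1_general (k H A : Type*) [Field k] [Ring H] [Ring A]
    [HopfAlgebra k H] [Algebra k A]
    (c : ComodAlg k H A) (j : H →ₐ[k] A) (hj : IsComodMap k c j.toLinearMap) :
    -- `▷ = adAction k j` preserves the coinvariants `B = A^{co H}` ...
    (∀ (h : H) (b : A), b ∈ c.coinv → adAction k j (h ⊗ₜ[k] b) ∈ c.coinv) ∧
    -- ... and makes `B` (indeed all of `A`, with the axioms below restricting to `B`)
    -- an `H`-module algebra:  `1 ▷ a = a`,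
    (∀ a : A, adAction k j ((1 : H) ⊗ₜ[k] a) = a) ∧
    -- `(h h') ▷ a = h ▷ (h' ▷ a)`,
    ((adAction k j) ∘ₗ (LinearMap.rTensor A (LinearMap.mul' k H))
        = (adAction k j) ∘ₗ (LinearMap.lTensor H (adAction k j)) ∘ₗ
            (TensorProduct.assoc k H H A).toLinearMap) ∧
    -- `h ▷ 1 = ε(h) 1`,
    (∀ h : H, adAction k j (h ⊗ₜ[k] (1 : A))
        = algebraMap k A (Coalgebra.counit (R := k) h)) ∧
    -- `h ▷ (a a') = (h₁ ▷ a)(h₂ ▷ a')`,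
    (∀ (h : H) (a a' : A) (ι : Type*) (r : Coalgebra.Repr k h ι),
        adAction k j (h ⊗ₜ[k] (a * a'))
          = ∑ i ∈ r.index,
              adAction k j (r.left i ⊗ₜ[k] a) * adAction k j (r.right i ⊗ₜ[k] a')) ∧
    -- `θ : B ⊗ H → A`, `b ⊗ h ↦ b j(h)`, is a `k`-linear bijection ...
    (Function.Bijective
      ((LinearMap.mul' k A) ∘ₗ
        (TensorProduct.map (c.coinv.val.toLinearMap) j.toLinearMap))) ∧
    -- ... which pulls the product of `A` back to the smash product
    -- `(b ⊗ h)(b' ⊗ h') = b (h₁ ▷ b') ⊗ h₂ h'` :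
    (∀ (b b' : c.coinv) (h h' : H) (ι : Type*) (r : Coalgebra.Repr k h ι),
        ((b : A) * j h) * ((b' : A) * j h')
          = ∑ i ∈ r.index,
              (b : A) * adAction k j (r.left i ⊗ₜ[k] (b' : A)) * j (r.right i * h')) ∧
    -- ... and which intertwines the coaction `id ⊗ Δ` of `B ⊗ H` with the coaction of `A`,
    -- i.e. `θ` is an isomorphism of right `H`-comodule algebras `B ♯ H ≅ A`:
    (c.δ.toLinearMap ∘ₗ
        ((LinearMap.mul' k A) ∘ₗ
          (TensorProduct.map (c.coinv.val.toLinearMap) j.toLinearMap))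
      = (TensorProduct.map
            ((LinearMap.mul' k A) ∘ₗ
              (TensorProduct.map (c.coinv.val.toLinearMap) j.toLinearMap))
            (LinearMap.id : H →ₗ[k] H)) ∘ₗ
          (TensorProduct.assoc k (c.coinv) H H).symm.toLinearMap ∘ₗ
          (LinearMap.lTensor (c.coinv) (Coalgebra.comul (R := k) (A := H)))) := by
  refine ⟨fun h _ hb => c.adAction_mem_coinv hj h hb, adAction_one_tmul j,
    TensorProduct.ext_threefold fun h h' a => adAction_mul_tmul j h h' a, adAction_tmul_one j,
    fun h a a' _ r => adAction_tmul_mul j r a a', (ComodAlg.smashEquiv hj).bijective,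
    fun b b' h h' _ r => ?_, ComodAlg.delta_comp_smashMap hj⟩
  calc (b : A) * j h * ((b' : A) * j h') = b * (j h * b') * j h' := by simp only [mul_assoc]
    _ = _ := by
      rw [← sum_adAction_tmul_mul j r]
      simp only [map_mul, Finset.mul_sum, Finset.sum_mul, mul_assoc]

/-- smash product decomposition of a trivial extension. -/
theorem statement1 (k H A : Type*) [Field k] [Ring H] [Ring A]
    [HopfAlgebra k H] [Algebra k A]
    (hS : Function.Bijective (HopfAlgebra.antipode (R := k) (A := H)))
    (c : ComodAlg k H A) (j : H →ₐ[k] A) (hj : IsComodMap k c j.toLinearMap) :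
    -- `▷ = adAction k j` preserves the coinvariants `B = A^{co H}` ...
    (∀ (h : H) (b : A), b ∈ c.coinv → adAction k j (h ⊗ₜ[k] b) ∈ c.coinv) ∧
    -- ... and makes `B` (indeed all of `A`, with the axioms below restricting to `B`)
    -- an `H`-module algebra:  `1 ▷ a = a`,
    (∀ a : A, adAction k j ((1 : H) ⊗ₜ[k] a) = a) ∧
    -- `(h h') ▷ a = h ▷ (h' ▷ a)`,
    ((adAction k j) ∘ₗ (LinearMap.rTensor A (LinearMap.mul' k H))
        = (adAction k j) ∘ₗ (LinearMap.lTensor H (adAction k j)) ∘ₗ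
            (TensorProduct.assoc k H H A).toLinearMap) ∧
    -- `h ▷ 1 = ε(h) 1`,
    (∀ h : H, adAction k j (h ⊗ₜ[k] (1 : A))
        = algebraMap k A (Coalgebra.counit (R := k) h)) ∧
    -- `h ▷ (a a') = (h₁ ▷ a)(h₂ ▷ a')`,
    (∀ (h : H) (a a' : A) (ι : Type*) (r : Coalgebra.Repr k h ι),
        adAction k j (h ⊗ₜ[k] (a * a'))
          = ∑ i ∈ r.index,
              adAction k j (r.left i ⊗ₜ[k] a) * adAction k j (r.right i ⊗ₜ[k] a')) ∧
    -- `θ : B ⊗ H → A`, `b ⊗ h ↦ b j(h)`, is a `k`-linear bijection ...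
    (Function.Bijective
      ((LinearMap.mul' k A) ∘ₗ
        (TensorProduct.map (c.coinv.val.toLinearMap) j.toLinearMap))) ∧
    -- ... which pulls the product of `A` back to the smash product
    -- `(b ⊗ h)(b' ⊗ h') = b (h₁ ▷ b') ⊗ h₂ h'` :
    (∀ (b b' : c.coinv) (h h' : H) (ι : Type*) (r : Coalgebra.Repr k h ι),
        ((b : A) * j h) * ((b' : A) * j h')
          = ∑ i ∈ r.index,
              (b : A) * adAction k j (r.left i ⊗ₜ[k] (b' : A)) * j (r.right i * h')) ∧
    -- ... and which intertwines the coaction `id ⊗ Δ` of `B ⊗ H` with the coaction of `A`,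
    -- i.e. `θ` is an isomorphism of right `H`-comodule algebras `B ♯ H ≅ A`:
    (c.δ.toLinearMap ∘ₗ
        ((LinearMap.mul' k A) ∘ₗ
          (TensorProduct.map (c.coinv.val.toLinearMap) j.toLinearMap))
      = (TensorProduct.map
            ((LinearMap.mul' k A) ∘ₗ
              (TensorProduct.map (c.coinv.val.toLinearMap) j.toLinearMap))
            (LinearMap.id : H →ₗ[k] H)) ∘ₗ
          (TensorProduct.assoc k (c.coinv) H H).symm.toLinearMap ∘ₗ
          (LinearMap.lTensor (c.coinv) (Coalgebra.comul (R := k) (A := H)))) :=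
  statement1_general k H A c j hj
end

section
/- In the localization O_q(M_n)[a_{11}^{-1}] of the quantum matrix algebra, the following commutation relations hold for all α, β, γ ∈ {2,…,n}: (i) a_{11}^{±1} D^{1β}_{1α} = D^{1β}_{1α} a_{11}^{±1}; (ii) for γ > β: a_{1γ} (a_{11}^{-1}D^{1β}_{1α}) = (a_{11}^{-1}D^{1β}_{1α}) a_{1γ}; (iii) for γ = β: a_{1β} (a_{11}^{-1}D^{1β}_{1α}) = q⁻¹ (a_{11}^{-1}D^{1β}_{1α}) a_{1β}; (iv) for γ < β: a_{1γ} (a_{11}^{-1}D^{1β}_{1α}) = (a_{11}^{-1}D^{1β}_{1α}) a_{1γ} + (q⁻¹−q) a_{1β} (a_{11}^{-1}D^{1γ}_{1α}). -/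
/-!
STATEMENT 13 (commutation relations used in Lemma 5.5 of the paper).  In the localization
`O_q(M_n)[a_{11}⁻¹]` of the quantum matrix algebra, for all `α, β, γ ∈ {2,…,n}`:
(i) `a_{11}^{±1} D^{1β}_{1α} = D^{1β}_{1α} a_{11}^{±1}`;
(ii) for `γ > β`: `a_{1γ} (a_{11}⁻¹D^{1β}_{1α}) = (a_{11}⁻¹D^{1β}_{1α}) a_{1γ}`;
(iii) for `γ = β`: `a_{1β} (a_{11}⁻¹D^{1β}_{1α}) = q⁻¹ (a_{11}⁻¹D^{1β}_{1α}) a_{1β}`;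
(iv) for `γ < β`:
`a_{1γ} (a_{11}⁻¹D^{1β}_{1α}) = (a_{11}⁻¹D^{1β}_{1α}) a_{1γ} + (q⁻¹−q) a_{1β} (a_{11}⁻¹D^{1γ}_{1α})`.

ENCODING.  Indices are `0`-based; `D^{1β}_{1α} = a_{11}a_{αβ} − q⁻¹a_{1β}a_{α1}` is
`Dm 0 α 0 β`; `O_q(M_n)[a_{11}⁻¹]` is the Ore localization at `{a_{11}^k}` (Ore set as a
hypothesis) and `a_{11}⁻¹ = 1 /ₒ a_{11}`.
-/

open TensorProduct

namespace QM

variable (R : Type) [CommRing R] (qv : Rˣ)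

/-- The free algebra on the `n × n` matrix generators `x_{ij}`. -/
abbrev FA (n : ℕ) : Type := FreeAlgebra R (Fin n × Fin n)

/-- The generator `x_{ij}`. -/
def X {n : ℕ} (i j : Fin n) : FA R n := FreeAlgebra.ι R (i, j)

/-- The Manin relations for quantum `n × n` matrices (deformation parameter `q = qv`):
`a_{ij}a_{kj} = q⁻¹a_{kj}a_{ij}` for `i<k`; `a_{ij}a_{il} = q⁻¹a_{il}a_{ij}` for `j<l`;
`a_{ij}a_{kl} = a_{kl}a_{ij}` if `i<k, j>l` (equivalently `i>k, j<l`);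
`a_{ij}a_{kl} − a_{kl}a_{ij} = (q⁻¹−q)a_{il}a_{kj}` if `i<k, j<l`. -/
inductive maninRel (n : ℕ) : FA R n → FA R n → Prop
  | col (i j k : Fin n) : i < k →
      maninRel n (X R i j * X R k j) (((qv⁻¹ : Rˣ) : R) • (X R k j * X R i j))
  | row (i j l : Fin n) : j < l →
      maninRel n (X R i j * X R i l) (((qv⁻¹ : Rˣ) : R) • (X R i l * X R i j))
  | comm (i j k l : Fin n) : i < k → l < j →
      maninRel n (X R i j * X R k l) (X R k l * X R i j)
  | cross (i j k l : Fin n) : i < k → j < l →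
      maninRel n (X R i j * X R k l)
        (X R k l * X R i j + (((qv⁻¹ : Rˣ) : R) - (qv : R)) • (X R i l * X R k j))

/-- The algebra `O_q(M_n)` of quantum matrices. -/
abbrev OqM (n : ℕ) : Type := RingQuot (maninRel R qv n)

/-- The matrix generator `a_{ij} ∈ O_q(M_n)`. -/
def a {n : ℕ} (i j : Fin n) : OqM R qv n :=
  RingQuot.mkAlgHom R (maninRel R qv n) (X R i j)

/-- The length (number of inversions) of a permutation of a finite linear order. -/
def len {α : Type*} [LinearOrder α] [Fintype α] [DecidableEq α] (σ : Equiv.Perm α) : ℕ :=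
  (Finset.univ.filter (fun p : α × α => p.1 < p.2 ∧ σ p.2 < σ p.1)).card

/-- `(-q)^{-ℓ(σ)} = (-(q⁻¹))^{ℓ(σ)}`. -/
def mq {α : Type*} [LinearOrder α] [Fintype α] [DecidableEq α] (σ : Equiv.Perm α) : R :=
  (-((qv⁻¹ : Rˣ) : R)) ^ (len σ)

/-- The quantum determinant `det_q = Σ_σ (−q)^{−ℓ(σ)} a_{1σ(1)}⋯a_{nσ(n)}`. -/
noncomputable def detq (n : ℕ) : OqM R qv n :=
  ∑ σ : Equiv.Perm (Fin n),
    mq R qv σ • ((List.finRange n).map (fun i => a R qv i (σ i))).prod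

/-- The relation imposing `det_q = 1`. -/
def detRel (n : ℕ) : OqM R qv n → OqM R qv n → Prop :=
  fun x y => x = detq R qv n ∧ y = 1

/-- The quantum special linear group `O_q(SL_n) = O_q(M_n)/(det_q − 1)`. -/
abbrev OqSL (n : ℕ) : Type := RingQuot (detRel R qv n)

/-- The generator `a_{ij} ∈ O_q(SL_n)`. -/
noncomputable def asl {n : ℕ} (i j : Fin n) : OqSL R qv n :=
  RingQuot.mkAlgHom R (detRel R qv n) (a R qv i j)

/-- The `2×2` quantum minor `D^{kl}_{ij} = a_{ik}a_{jl} − q⁻¹a_{il}a_{jk}`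
(rows `i<j`, columns `k<l`), in `O_q(M_n)`. -/
def Dm {n : ℕ} (i j k l : Fin n) : OqM R qv n :=
  a R qv i k * a R qv j l - ((qv⁻¹ : Rˣ) : R) • (a R qv i l * a R qv j k)

end QM

open QM OreLocalization

/-- `ℂ_q = ℂ[q,q⁻¹]`, the ring of complex Laurent polynomials. -/
noncomputable def Rq : Type := LaurentPolynomial ℂ

noncomputable instance : CommRing Rq := inferInstanceAs (CommRing (LaurentPolynomial ℂ))

/-- The unit `q ∈ ℂ[q,q⁻¹]`. -/
noncomputable def qUnit : Rqˣ where
  val := LaurentPolynomial.T 1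
  inv := LaurentPolynomial.T (-1)
  val_inv := by
    have h : (LaurentPolynomial.T 1 : LaurentPolynomial ℂ) * LaurentPolynomial.T (-1) = 1 := by
      rw [← LaurentPolynomial.T_add]; norm_num
    exact h
  inv_val := by
    have h : (LaurentPolynomial.T (-1) : LaurentPolynomial ℂ) * LaurentPolynomial.T 1 = 1 := by
      rw [← LaurentPolynomial.T_add]; norm_num
    exact h

/-!
In `O_q(M_n)` the generators of the first row `q`-commute with the corner:
`a_{1γ} a_{11} = q a_{11} a_{1γ}`, hence `a_{1γ} a_{11}⁻¹ = q⁻¹ a_{11}⁻¹ a_{1γ}` in the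
localization. Moving `a_{1γ}` past `a_{11}⁻¹` thus reduces every relation to one between
`a_{1γ}` and `D^{1β}_{1α}` in `O_q(M_n)` itself, and those follow by expanding the minor with the
Manin relations. They hold for any minor `D^{jl}_{ik}`, `i < k`, `j < l`, and generator `a_{im}`.
-/

section SkewCommutation

lemma units_inv_smul_smul {R M : Type*} [CommRing R] [AddCommMonoid M] [Module R M] (u : Rˣ)
    (x : M) :
    ((u⁻¹ : Rˣ) : R) • ((u : R) • x) = x := by
  rw [← Units.smul_def, ← Units.smul_def, inv_smul_smul]

lemma units_smul_inv_smul {R M : Type*} [CommRing R] [AddCommMonoid M] [Module R M] (u : Rˣ)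
    (x : M) :
    (u : R) • (((u⁻¹ : Rˣ) : R) • x) = x := by
  rw [← Units.smul_def, ← Units.smul_def, smul_inv_smul]

lemma mul_eq_smul_mul_of_mul_eq_inv_smul {R A : Type*} [CommRing R] [Ring A] [Algebra R A]
    {x y : A} {u : Rˣ} (h : x * y = ((u⁻¹ : Rˣ) : R) • (y * x)) :
    y * x = (u : R) • (x * y) := by
  rw [h, units_smul_inv_smul]

lemma mul_mul_eq_of_mul_eq {A : Type*} [Semigroup A] {x y z : A} (h : x * y = z) (w : A) :
    x * (y * w) = z * w := by
  rw [← mul_assoc, h]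

variable {R B : Type*} [CommRing R] [Ring B] [Algebra R B] {u : Bˣ} {c : Rˣ} {x : B}

lemma mul_units_inv_eq_smul_of_mul_eq_smul (hx : x * u = (c : R) • (u * x)) :
    x * ↑u⁻¹ = ((c⁻¹ : Rˣ) : R) • (↑u⁻¹ * x) := by
  have h : ↑u⁻¹ * x = (c : R) • (x * ↑u⁻¹) :=
    calc ↑u⁻¹ * x = ↑u⁻¹ * (x * u) * ↑u⁻¹ := by simp [mul_assoc]
      _ = (c : R) • (x * ↑u⁻¹) := by simp [hx]
  rw [h, units_inv_smul_smul]

lemma mul_units_inv_mul_of_mul_eq_smul (hx : x * u = (c : R) • (u * x)) {d : B}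
    (hd : x * d = (c : R) • (d * x)) :
    x * (↑u⁻¹ * d) = ↑u⁻¹ * d * x := by
  rw [← mul_assoc, mul_units_inv_eq_smul_of_mul_eq_smul hx, smul_mul_assoc, mul_assoc, hd,
    mul_smul_comm, units_inv_smul_smul, mul_assoc]

lemma mul_units_inv_mul_of_commute (hx : x * u = (c : R) • (u * x)) {d : B}
    (hd : Commute x d) :
    x * (↑u⁻¹ * d) = ((c⁻¹ : Rˣ) : R) • (↑u⁻¹ * d * x) := by
  rw [← mul_assoc, mul_units_inv_eq_smul_of_mul_eq_smul hx, smul_mul_assoc, mul_assoc, hd.eq,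
    mul_assoc]

lemma mul_units_inv_mul_of_mul_eq_smul_add (hx : x * u = (c : R) • (u * x)) {y d d' : B}
    {r : R} (hy : y * u = (c : R) • (u * y)) (hd : x * d = (c : R) • (d * x) + r • (y * d')) :
    x * (↑u⁻¹ * d) = ↑u⁻¹ * d * x + r • (y * (↑u⁻¹ * d')) := by
  rw [← mul_assoc, mul_units_inv_eq_smul_of_mul_eq_smul hx, smul_mul_assoc, mul_assoc, hd,
    mul_add, mul_smul_comm, mul_smul_comm, smul_add, units_inv_smul_smul, ← mul_assoc y,
    mul_units_inv_eq_smul_of_mul_eq_smul hy, smul_comm, ← mul_assoc, ← mul_assoc,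
    smul_mul_assoc]

end SkewCommutation

namespace QM

variable {R : Type} [CommRing R] {qv : Rˣ} {n : ℕ}

lemma a_mul_a_same_col (j : Fin n) {i k : Fin n} (h : i < k) :
    a R qv i j * a R qv k j = ((qv⁻¹ : Rˣ) : R) • (a R qv k j * a R qv i j) := by
  simpa [a] using RingQuot.mkAlgHom_rel R (maninRel.col (R := R) (qv := qv) i j k h)

lemma a_mul_a_same_row (i : Fin n) {j l : Fin n} (h : j < l) :
    a R qv i j * a R qv i l = ((qv⁻¹ : Rˣ) : R) • (a R qv i l * a R qv i j) := by
  simpa [a] using RingQuot.mkAlgHom_rel R (maninRel.row (R := R) (qv := qv) i j l h)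

lemma a_mul_a_of_lt_of_gt {i j k l : Fin n} (hik : i < k) (hlj : l < j) :
    a R qv i j * a R qv k l = a R qv k l * a R qv i j := by
  simpa [a] using RingQuot.mkAlgHom_rel R (maninRel.comm (R := R) (qv := qv) i j k l hik hlj)

lemma a_mul_a_of_lt_of_lt {i j k l : Fin n} (hik : i < k) (hjl : j < l) :
    a R qv i j * a R qv k l = a R qv k l * a R qv i j
      + (((qv⁻¹ : Rˣ) : R) - (qv : R)) • (a R qv i l * a R qv k j) := by
  simpa [a] using RingQuot.mkAlgHom_rel R (maninRel.cross (R := R) (qv := qv) i j k l hik hjl)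

variable {i k j l m : Fin n}

/- Each relation below is oriented so that `simp only` rewrites both sides of the goal into the
same normally ordered linear combination of monomials. -/
lemma commute_a_Dm_left (hik : i < k) (hjl : j < l) :
    Commute (a R qv i j) (Dm R qv i k j l) := by
  have h₁ := eq_sub_of_add_eq (a_mul_a_of_lt_of_lt (R := R) (qv := qv) hik hjl).symm
  have h₂ := mul_eq_smul_mul_of_mul_eq_inv_smul (a_mul_a_same_row (R := R) (qv := qv) i hjl)
  have h₃ := mul_eq_smul_mul_of_mul_eq_inv_smul (a_mul_a_same_col (R := R) (qv := qv) j hik)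
  simp only [Commute, SemiconjBy, Dm, mul_sub, sub_mul, mul_smul_comm, smul_mul_assoc,
    mul_assoc, units_inv_smul_smul, h₁, h₃, mul_mul_eq_of_mul_eq h₂]
  module

lemma commute_a_Dm_right (hik : i < k) (hjl : j < l) :
    Commute (a R qv i l) (Dm R qv i k j l) := by
  have h₁ := mul_eq_smul_mul_of_mul_eq_inv_smul (a_mul_a_same_row (R := R) (qv := qv) i hjl)
  have h₂ := mul_eq_smul_mul_of_mul_eq_inv_smul (a_mul_a_same_col (R := R) (qv := qv) j hik)
  have h₃ := (a_mul_a_of_lt_of_gt (R := R) (qv := qv) hik hjl).symm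
  have h₄ := mul_eq_smul_mul_of_mul_eq_inv_smul (a_mul_a_same_col (R := R) (qv := qv) l hik)
  simp only [Commute, SemiconjBy, Dm, mul_sub, sub_mul, mul_smul_comm, smul_mul_assoc,
    mul_assoc, h₃, h₄, mul_mul_eq_of_mul_eq h₁]

lemma a_mul_Dm_of_lt (hik : i < k) (hjl : j < l) (hlm : l < m) :
    a R qv i m * Dm R qv i k j l = (qv : R) • (Dm R qv i k j l * a R qv i m) := by
  have hjm := hjl.trans hlm
  have h₁ := mul_eq_smul_mul_of_mul_eq_inv_smul (a_mul_a_same_row (R := R) (qv := qv) i hjm)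
  have h₂ := (a_mul_a_of_lt_of_gt (R := R) (qv := qv) hik hlm).symm
  have h₃ := mul_eq_smul_mul_of_mul_eq_inv_smul (a_mul_a_same_row (R := R) (qv := qv) i hlm)
  have h₄ := (a_mul_a_of_lt_of_gt (R := R) (qv := qv) hik hjm).symm
  simp only [Dm, mul_sub, sub_mul, mul_smul_comm, smul_mul_assoc, smul_sub, mul_assoc,
    units_inv_smul_smul, units_smul_inv_smul, h₂, h₄, mul_mul_eq_of_mul_eq h₁,
    mul_mul_eq_of_mul_eq h₃]

lemma a_mul_Dm_of_lt_of_lt (hik : i < k) (hjm : j < m) (hml : m < l) :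
    a R qv i m * Dm R qv i k j l = (qv : R) • (Dm R qv i k j l * a R qv i m)
      + (((qv⁻¹ : Rˣ) : R) - (qv : R)) • (a R qv i l * Dm R qv i k j m) := by
  have hjl := hjm.trans hml
  have h₁ := mul_eq_smul_mul_of_mul_eq_inv_smul (a_mul_a_same_row (R := R) (qv := qv) i hjm)
  have h₂ := mul_eq_smul_mul_of_mul_eq_inv_smul (a_mul_a_same_row (R := R) (qv := qv) i hjl)
  have h₃ := eq_sub_of_add_eq (a_mul_a_of_lt_of_lt (R := R) (qv := qv) hik hml).symm
  have h₄ := a_mul_a_same_row (R := R) (qv := qv) i hml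
  have h₅ := (a_mul_a_of_lt_of_gt (R := R) (qv := qv) hik hjm).symm
  simp only [Dm, mul_sub, sub_mul, mul_smul_comm, smul_mul_assoc, smul_sub, sub_smul,
    mul_assoc, units_inv_smul_smul, units_smul_inv_smul, h₃, h₅, mul_mul_eq_of_mul_eq h₁,
    mul_mul_eq_of_mul_eq h₂, mul_mul_eq_of_mul_eq h₄]
  match_scalars
  · ring
  · ring
  · linear_combination qv.mul_inv

end QM

def OreLocalization.numeratorAlgHom {R A : Type*} [CommSemiring R] [Ring A] [Algebra R A]
    (S : Submonoid A) [OreSet S] : A →ₐ[R] OreLocalization S A :=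
  { numeratorRingHom with commutes' := fun _ => rfl }

/-- **Statement 13.**  Commutation relations between the `a_{1γ}` and the elements
`a_{11}⁻¹D^{1β}_{1α}` in `O_q(M_n)[a_{11}⁻¹]`. -/
theorem statement13 (n : ℕ) [NeZero n]
    [oreA : OreSet (Submonoid.powers (a Rq qUnit (0 : Fin n) 0))]
    (α β γ : Fin n) (hα : α ≠ 0) (hβ : β ≠ 0) (hγ : γ ≠ 0) :
    letI ι : OqM Rq qUnit n →+*
        OreLocalization (Submonoid.powers (a Rq qUnit (0 : Fin n) 0)) (OqM Rq qUnit n) :=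
      numeratorRingHom
    letI inv : OreLocalization (Submonoid.powers (a Rq qUnit (0 : Fin n) 0))
        (OqM Rq qUnit n) :=
      (1 : OqM Rq qUnit n) /ₒ ⟨a Rq qUnit 0 0, Submonoid.mem_powers _⟩
    -- (i) `a_{11}^{±1}` commutes with `D^{1β}_{1α}`:
    (ι (a Rq qUnit 0 0) * ι (Dm Rq qUnit 0 α 0 β)
        = ι (Dm Rq qUnit 0 α 0 β) * ι (a Rq qUnit 0 0)) ∧
    (inv * ι (Dm Rq qUnit 0 α 0 β) = ι (Dm Rq qUnit 0 α 0 β) * inv) ∧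
    -- (ii) `γ > β`:
    (β < γ →
      ι (a Rq qUnit 0 γ) * (inv * ι (Dm Rq qUnit 0 α 0 β))
        = (inv * ι (Dm Rq qUnit 0 α 0 β)) * ι (a Rq qUnit 0 γ)) ∧
    -- (iii) `γ = β`:
    (ι (a Rq qUnit 0 β) * (inv * ι (Dm Rq qUnit 0 α 0 β))
        = ((qUnit⁻¹ : Rqˣ) : Rq) •
            ((inv * ι (Dm Rq qUnit 0 α 0 β)) * ι (a Rq qUnit 0 β))) ∧
    -- (iv) `γ < β`:
    (γ < β →
      ι (a Rq qUnit 0 γ) * (inv * ι (Dm Rq qUnit 0 α 0 β))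
        = (inv * ι (Dm Rq qUnit 0 α 0 β)) * ι (a Rq qUnit 0 γ)
          + (((qUnit⁻¹ : Rqˣ) : Rq) - (qUnit : Rq)) •
              (ι (a Rq qUnit 0 β) * (inv * ι (Dm Rq qUnit 0 α 0 γ)))) := by
  let φ :=
    OreLocalization.numeratorAlgHom (R := Rq) (Submonoid.powers (a Rq qUnit (0 : Fin n) 0))
  let u := numeratorUnit (⟨a Rq qUnit 0 0, Submonoid.mem_powers _⟩ :
    Submonoid.powers (a Rq qUnit (0 : Fin n) 0))
  have hα₀ : 0 < α := Fin.pos_iff_ne_zero.mpr hα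
  have hβ₀ : 0 < β := Fin.pos_iff_ne_zero.mpr hβ
  have hγ₀ : 0 < γ := Fin.pos_iff_ne_zero.mpr hγ
  have hrow : ∀ {m : Fin n}, 0 < m → φ (a Rq qUnit 0 m) * φ (a Rq qUnit 0 0)
      = (qUnit : Rq) • (φ (a Rq qUnit 0 0) * φ (a Rq qUnit 0 m)) := fun hm => by
    simpa only [map_mul, map_smul] using
      congrArg φ (mul_eq_smul_mul_of_mul_eq_inv_smul (a_mul_a_same_row 0 hm))
  have hcomm : Commute u.val (φ (Dm Rq qUnit 0 α 0 β)) :=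
    (commute_a_Dm_left hα₀ hβ₀).map φ
  refine ⟨hcomm.eq, hcomm.units_inv_left.eq, fun hβγ => ?_,
    mul_units_inv_mul_of_commute (u := u) (hrow hβ₀) ((commute_a_Dm_right hα₀ hβ₀).map φ),
    fun hγβ => ?_⟩
  · have hD : φ (a Rq qUnit 0 γ) * φ (Dm Rq qUnit 0 α 0 β)
        = (qUnit : Rq) • (φ (Dm Rq qUnit 0 α 0 β) * φ (a Rq qUnit 0 γ)) := by
      simpa only [map_mul, map_smul] using congrArg φ (a_mul_Dm_of_lt hα₀ hβ₀ hβγ)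
    exact mul_units_inv_mul_of_mul_eq_smul (u := u) (hrow hγ₀) hD
  · have hD : φ (a Rq qUnit 0 γ) * φ (Dm Rq qUnit 0 α 0 β)
        = (qUnit : Rq) • (φ (Dm Rq qUnit 0 α 0 β) * φ (a Rq qUnit 0 γ))
          + (((qUnit⁻¹ : Rqˣ) : Rq) - (qUnit : Rq)) •
              (φ (a Rq qUnit 0 β) * φ (Dm Rq qUnit 0 α 0 γ)) := by
      simpa only [map_mul, map_smul, map_add] using
        congrArg φ (a_mul_Dm_of_lt_of_lt hα₀ hγ₀ hγβ)
    exact mul_units_inv_mul_of_mul_eq_smul_add (u := u) (hrow hγ₀) (hrow hβ₀) hD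
end
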